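/- arXiv:1010.1256 — 3 statements merged into one kernel-verified Lean document; each statement's English description precedes it below -/
import Mathlib

section
/- Every recursive classically-enhanced subsystem convolutional encoder with at least one information qubit (k_q ≥ 1) is catastrophic; that is, if for every logical input sequence of total weight one every element of its logical coset has infinite weight, then the state diagram of the encoder contains a directed cycle all of whose edges have physical labels of weight zero while some edge of the cycle has a logical label of nonzero weight. -/
/-!
Over the free inputs (pure-Z ancillas and classical bits, arbitrary gauge) the memory evolves as
a linear control system `M ↦ A M + B w`; let `R` be its controllable subspace. Recursiveness
means that the memory response `Aˢ C e` to a weight-one impulse `e` never enters `R`: otherwise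
free inputs could steer the memory back to `0`, and the output would have finite weight.

Since `U` is symplectic, the input frame that `U` maps to `(χ : 0)` has memory part `A* χ`,
the symplectic adjoint of `A`, and logical part `L χ` with `ω(e, L χ) = ω(C e, χ)`. When `χ ⊥ R`
its ancilla and classical parts are pure-Z, so it is an edge `A* χ → χ` of the state diagram with
physical label `0`. Take `i` such that every `(A*)ⁱ χ` is periodic, and `χ ⊥ R` with
`ω(Aⁱ C e, χ) ≠ 0`. The periodic orbit of `ψ = (A*)ⁱ χ`, traversed backwards, is a silent cycle,
and its edge into `ψ` has logical label `L ψ ≠ 0`, because `ω(e, L ψ) = ω(Aⁱ C e, χ) ≠ 0`.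
-/

/-!
Pauli operators (up to phase) on a finite index set of qubits are represented by
their binary symplectic vectors: for each qubit an (x, z)-pair in 𝔽₂ × 𝔽₂.
-/

abbrev F2 := ZMod 2

abbrev Pauli (ι : Type) : Type := ι → F2 × F2

/-- The weight of a Pauli operator: the number of qubits on which it acts nontrivially. -/
def pWeight {ι : Type} [Fintype ι] (p : Pauli ι) : ℕ :=
  (Finset.univ.filter fun i => p i ≠ 0).card

/-- A Pauli is pure-Z if its X-part vanishes. -/
def pureZ {ι : Type} (p : Pauli ι) : Prop := ∀ i, (p i).1 = 0

/-- A Pauli is pure-X if its Z-part vanishes. -/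
def pureX {ι : Type} (p : Pauli ι) : Prop := ∀ i, (p i).2 = 0

/-- The binary symplectic form. -/
def sympl {ι : Type} [Fintype ι] (p q : Pauli ι) : F2 :=
  ∑ i, ((p i).1 * (q i).2 + (p i).2 * (q i).1)

/-- A classically-enhanced subsystem convolutional encoder: an invertible linear
transformation over 𝔽₂ from the binary symplectic representation of Paulis on
(memory : information : ancilla : classical : gauge) positions to that on
(memory : physical) positions. -/
abbrev CEEnc (m kq a kc g n : ℕ) : Type :=
  Pauli (Fin m ⊕ Fin kq ⊕ Fin a ⊕ Fin kc ⊕ Fin g) ≃ₗ[F2] Pauli (Fin m ⊕ Fin n)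

variable {m kq a kc g n : ℕ}

/-- Assemble the blocks (M : L_q : S : C : G) into one input vector. -/
def ceInput (M : Pauli (Fin m)) (Lq : Pauli (Fin kq)) (S : Pauli (Fin a))
    (C : Pauli (Fin kc)) (G : Pauli (Fin g)) :
    Pauli (Fin m ⊕ Fin kq ⊕ Fin a ⊕ Fin kc ⊕ Fin g) :=
  Sum.elim M (Sum.elim Lq (Sum.elim S (Sum.elim C G)))

/-- The memory part M' of an output vector (M' : P). -/
def outMem (w : Pauli (Fin m ⊕ Fin n)) : Pauli (Fin m) := fun i => w (Sum.inl i)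

/-- The physical part P of an output vector (M' : P). -/
def outPhys (w : Pauli (Fin m ⊕ Fin n)) : Pauli (Fin n) := fun i => w (Sum.inr i)

/-- Edge of the state diagram of a classically-enhanced subsystem encoder:
`M → M'` with logical label `(Lq : Lcx)` (with `Lcx` pure-X) and physical label `P`,
witnessed by a pure-Z `Sz` on the ancillas, a pure-Z `Cz` on the classical bits and
an arbitrary `G` on the gauge qubits. -/
def CEEdge (U : CEEnc m kq a kc g n) (M M' : Pauli (Fin m)) (Lq : Pauli (Fin kq))
    (Lcx : Pauli (Fin kc)) (P : Pauli (Fin n)) : Prop :=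
  pureX Lcx ∧ ∃ (Sz : Pauli (Fin a)) (Cz : Pauli (Fin kc)) (G : Pauli (Fin g)),
    pureZ Sz ∧ pureZ Cz ∧
    outMem (U (ceInput M Lq Sz (Lcx + Cz) G)) = M' ∧
    outPhys (U (ceInput M Lq Sz (Lcx + Cz) G)) = P

/-- Catastrophicity: the state diagram contains a directed cycle all of whose edges have
physical labels of weight zero while some edge of the cycle has a logical label of
nonzero weight. -/
def CECatastrophic (U : CEEnc m kq a kc g n) : Prop :=
  ∃ ℓ : ℕ, 0 < ℓ ∧ ∃ (Ms : ZMod ℓ → Pauli (Fin m)) (Lqs : ZMod ℓ → Pauli (Fin kq))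
    (Lcxs : ZMod ℓ → Pauli (Fin kc)) (Ps : ZMod ℓ → Pauli (Fin n)),
    (∀ t, CEEdge U (Ms t) (Ms (t + 1)) (Lqs t) (Lcxs t) (Ps t)) ∧
    (∀ t, pWeight (Ps t) = 0) ∧
    (∃ t, pWeight (Lqs t) + pWeight (Lcxs t) ≠ 0)

/-- Membership of a physical output sequence in the logical coset of the logical input
sequence `((Lq t : Lcx t))_{t ∈ ℕ}`. -/
def CEInCoset (U : CEEnc m kq a kc g n) (Lq : ℕ → Pauli (Fin kq))
    (Lcx : ℕ → Pauli (Fin kc)) (P : ℕ → Pauli (Fin n)) : Prop :=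
  ∃ (M : ℕ → Pauli (Fin m)) (Sz : ℕ → Pauli (Fin a)) (Cz : ℕ → Pauli (Fin kc))
    (G : ℕ → Pauli (Fin g)),
    M 0 = 0 ∧ (∀ t, pureZ (Sz t)) ∧ (∀ t, pureZ (Cz t)) ∧
    ∀ t, M (t + 1) = outMem (U (ceInput (M t) (Lq t) (Sz t) (Lcx t + Cz t) (G t))) ∧
         P t = outPhys (U (ceInput (M t) (Lq t) (Sz t) (Lcx t + Cz t) (G t)))

/-- Recursiveness: every logical input sequence of total weight one has the property that
every element of its logical coset has infinite weight (is nonzero in infinitely many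
frames). -/
def CERecursive (U : CEEnc m kq a kc g n) : Prop :=
  ∀ (Lq : ℕ → Pauli (Fin kq)) (Lcx : ℕ → Pauli (Fin kc)),
    (∀ t, pureX (Lcx t)) →
    (∃ t0 : ℕ, pWeight (Lq t0) + pWeight (Lcx t0) = 1 ∧
      ∀ t, t ≠ t0 → Lq t = 0 ∧ Lcx t = 0) →
    ∀ P : ℕ → Pauli (Fin n), CEInCoset U Lq Lcx P → {t : ℕ | P t ≠ 0}.Infinite


namespace LinearControl

variable {R V W : Type*} [Ring R] [AddCommGroup V] [Module R V] [AddCommGroup W] [Module R W]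

def traj (A : Module.End R V) (B : W →ₗ[R] V) (x : V) (d : ℕ → W) : ℕ → V
  | 0 => x
  | t + 1 => A (traj A B x d t) + B (d t)

def reachable (A : Module.End R V) (B : W →ₗ[R] V) (F : Submodule R W) : ℕ → Submodule R V
  | 0 => ⊥
  | t + 1 => (reachable A B F t).map A ⊔ F.map B

def controllable (A : Module.End R V) (B : W →ₗ[R] V) (F : Submodule R W) : Submodule R V :=
  ⨆ t, reachable A B F t

variable {A : Module.End R V} {B : W →ₗ[R] V} {F : Submodule R W}

lemma traj_eq_pow_add (x : V) (d : ℕ → W) (t : ℕ) :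
    traj A B x d t = (A ^ t) x + traj A B 0 d t := by
  induction t with
  | zero => simp [traj]
  | succ t ih =>
    simp only [traj, ih, map_add, pow_succ', Module.End.mul_apply]
    abel

lemma traj_succ' (x : V) (d : ℕ → W) (t : ℕ) :
    traj A B x d (t + 1) = traj A B (A x + B (d 0)) (fun j => d (j + 1)) t := by
  induction t with
  | zero => rfl
  | succ t ih => rw [traj, ih]; rfl

lemma traj_congr {x : V} {d d' : ℕ → W} {t : ℕ} (h : ∀ j < t, d j = d' j) :
    traj A B x d t = traj A B x d' t := by
  induction t with
  | zero => rfl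
  | succ t ih => rw [traj, traj, ih fun j hj => h j (by omega), h t t.lt_succ_self]

lemma traj_eq_zero_of_le {x : V} {d : ℕ → W} {T t : ℕ} (hT : traj A B x d T = 0)
    (hd : ∀ j, T ≤ j → d j = 0) (ht : T ≤ t) : traj A B x d t = 0 := by
  induction t, ht using Nat.le_induction with
  | base => exact hT
  | succ t ht ih => rw [traj, ih, hd t ht, map_zero, map_zero, add_zero]

lemma reachable_mono : Monotone (reachable A B F) := by
  refine monotone_nat_of_le_succ fun t => ?_
  induction t with
  | zero => exact bot_le
  | succ t ih => exact sup_le_sup_right (Submodule.map_mono ih) _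

lemma mem_controllable_iff {y : V} : y ∈ controllable A B F ↔ ∃ t, y ∈ reachable A B F t :=
  Submodule.mem_iSup_of_directed _ reachable_mono.directed_le

lemma apply_mem_controllable {y : V} (hy : y ∈ controllable A B F) :
    A y ∈ controllable A B F := by
  obtain ⟨t, ht⟩ := mem_controllable_iff.1 hy
  exact mem_controllable_iff.2 ⟨t + 1, Submodule.mem_sup_left (Submodule.mem_map_of_mem ht)⟩

lemma apply_mem_controllable_of_mem {w : W} (hw : w ∈ F) : B w ∈ controllable A B F :=
  mem_controllable_iff.2 ⟨1, Submodule.mem_sup_right (Submodule.mem_map_of_mem hw)⟩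

lemma exists_reachable_eq_controllable [IsNoetherian R V] :
    ∃ t₀, ∀ t, t₀ ≤ t → reachable A B F t = controllable A B F := by
  obtain ⟨t₀, ht₀⟩ :=
    monotone_stabilizes_iff_noetherian.2 ‹_› ⟨reachable A B F, reachable_mono⟩
  have hsup : controllable A B F = reachable A B F t₀ :=
    le_antisymm
      (iSup_le fun t => (reachable_mono (le_max_left t t₀)).trans (ht₀ _ (le_max_right _ _)).ge)
      (le_iSup (reachable A B F) t₀)
  exact ⟨t₀, fun t ht => (ht₀ t ht).symm.trans hsup.symm⟩

lemma exists_traj_eq_of_mem_reachable {t : ℕ} {y : V} (hy : y ∈ reachable A B F t) :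
    ∃ d : ℕ → W, (∀ j, d j ∈ F) ∧ (∀ j, t ≤ j → d j = 0) ∧ traj A B 0 d t = y := by
  induction t generalizing y with
  | zero => exact ⟨0, fun _ => F.zero_mem, fun _ _ => rfl, ((Submodule.mem_bot R).1 hy).symm⟩
  | succ t ih =>
    obtain ⟨_, ⟨y', hy', rfl⟩, _, ⟨w, hw, rfl⟩, rfl⟩ := Submodule.mem_sup.1 hy
    obtain ⟨d, hdF, hd0, rfl⟩ := ih hy'
    refine ⟨Function.update d t w, fun j => ?_, fun j hj => ?_, ?_⟩
    · rcases eq_or_ne j t with rfl | h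
      · rwa [Function.update_self]
      · rw [Function.update_of_ne h]; exact hdF j
    · rw [Function.update_of_ne (by omega), hd0 j (by omega)]
    · rw [traj, traj_congr fun j hj => Function.update_of_ne hj.ne _ _, Function.update_self]

lemma exists_traj_eq_zero [IsNoetherian R V] {x : V} {s : ℕ}
    (hx : (A ^ s) x ∈ controllable A B F) :
    ∃ (d : ℕ → W) (T : ℕ), (∀ j, d j ∈ F) ∧ (∀ j, T ≤ j → d j = 0) ∧ traj A B x d T = 0 := by
  obtain ⟨t₀, ht₀⟩ := exists_reachable_eq_controllable (A := A) (B := B) (F := F)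
  have hmem : -(A ^ (t₀ + s)) x ∈ reachable A B F (t₀ + s) := by
    rw [ht₀ _ (Nat.le_add_right _ _), pow_add, Module.End.mul_apply]
    exact neg_mem (Module.End.pow_apply_mem_of_forall_mem _ (fun _ => apply_mem_controllable) _ hx)
  obtain ⟨d, hdF, hd0, hd⟩ := exists_traj_eq_of_mem_reachable hmem
  exact ⟨d, t₀ + s, hdF, hd0, by rw [traj_eq_pow_add, hd, add_neg_cancel]⟩

end LinearControl

section Pauli

variable {ι : Type}

lemma pWeight_eq_zero_iff [Fintype ι] {p : Pauli ι} : pWeight p = 0 ↔ p = 0 := by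
  simp [pWeight, Finset.filter_eq_empty_iff, funext_iff]

lemma pWeight_single [Fintype ι] [DecidableEq ι] (i : ι) {x : F2 × F2} (hx : x ≠ 0) :
    pWeight (Pi.single i x) = 1 := by
  rw [pWeight, Finset.card_eq_one]
  refine ⟨i, Finset.ext fun j => ?_⟩
  by_cases h : j = i <;> simp [h, hx]

def pureZSubmodule (ι : Type) : Submodule F2 (Pauli ι) where
  carrier := {p | pureZ p}
  add_mem' hp hq i := by simp [hp i, hq i]
  zero_mem' _ := rfl
  smul_mem' _ _ hp i := by simp [hp i]

@[simp]
lemma mem_pureZSubmodule {p : Pauli ι} : p ∈ pureZSubmodule ι ↔ pureZ p := Iff.rfl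

variable [Fintype ι]

@[simp]
lemma sympl_zero_left (q : Pauli ι) : sympl 0 q = 0 := by simp [sympl]

@[simp]
lemma sympl_zero_right (p : Pauli ι) : sympl p 0 = 0 := by simp [sympl]

lemma sympl_sumElim {κ : Type} [Fintype κ] (p p' : Pauli ι) (q q' : Pauli κ) :
    sympl (Sum.elim p q) (Sum.elim p' q') = sympl p p' + sympl q q' := by
  simp [sympl, Fintype.sum_sum_type]

lemma pureZ_of_forall_sympl_eq_zero [DecidableEq ι] {p : Pauli ι}
    (h : ∀ q, pureZ q → sympl q p = 0) : pureZ p := by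
  intro i
  have hZ : pureZ (Pi.single i ((0 : F2), (1 : F2)) : Pauli ι) := fun j => by
    by_cases hj : j = i <;> simp [hj]
  simpa [sympl, Pi.single_apply, apply_ite Prod.fst, apply_ite Prod.snd] using h _ hZ

lemma exists_sympl_eq (f : Module.Dual F2 (Pauli ι)) : ∃ χ : Pauli ι, ∀ u, sympl u χ = f u := by
  classical
  refine ⟨fun i => (f (Pi.single i ((0 : F2), (1 : F2)) : Pauli ι),
    f (Pi.single i ((1 : F2), (0 : F2)) : Pauli ι)), fun u => ?_⟩
  conv_rhs => rw [← Finset.univ_sum_single u, map_sum]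
  refine Finset.sum_congr rfl fun i _ => ?_
  have hsplit : (Pi.single i (u i) : Pauli ι) =
      (u i).1 • (Pi.single i ((1 : F2), (0 : F2)) : Pauli ι) +
        (u i).2 • (Pi.single i ((0 : F2), (1 : F2)) : Pauli ι) := by
    rw [← Pi.single_smul, ← Pi.single_smul, ← Pi.single_add]
    congr 1
    ext <;> simp
  rw [hsplit, map_add, map_smul, map_smul, smul_eq_mul, smul_eq_mul]

lemma exists_sympl_eq_zero_ne_zero {p : Submodule F2 (Pauli ι)} {v : Pauli ι} (hv : v ∉ p) :
    ∃ χ : Pauli ι, (∀ y ∈ p, sympl y χ = 0) ∧ sympl v χ ≠ 0 := by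
  obtain ⟨f, hfv, hfp⟩ := Submodule.exists_dual_map_eq_bot_of_notMem hv inferInstance
  obtain ⟨χ, hχ⟩ := exists_sympl_eq f
  refine ⟨χ, fun y hy => ?_, by rwa [hχ]⟩
  rw [hχ, ← Submodule.mem_bot F2, ← hfp]
  exact Submodule.mem_map_of_mem hy

end Pauli

lemma exists_isPeriodicPt_iterate {α : Type*} [Finite α] (f : α → α) :
    ∃ i p, 0 < p ∧ ∀ x, Function.IsPeriodicPt f p (f^[i] x) := by
  obtain ⟨i, j, hij, h⟩ := Finite.exists_ne_map_eq_of_infinite fun t : ℕ => f^[t]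
  wlog hlt : i < j generalizing i j
  · exact this j i hij.symm h.symm (by omega)
  refine ⟨i, j - i, by omega, fun x => ?_⟩
  rw [Function.IsPeriodicPt, Function.IsFixedPt, ← Function.iterate_add_apply,
    Nat.sub_add_cancel hlt.le]
  exact congrFun h.symm x

lemma Function.IsPeriodicPt.iterate_val_add_one {α : Type*} {f : α → α} {x : α} {p : ℕ}
    [NeZero p] (h : Function.IsPeriodicPt f p x) (t : ZMod p) :
    f^[(t + 1).val] x = f (f^[t.val] x) := by
  rw [ZMod.val_add, ZMod.val_one_eq_one_mod, Nat.add_mod_mod, h.iterate_mod_apply,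
    Function.iterate_succ_apply']

/-- The input of one frame apart from the memory: `(L_q : S : C : G)`. -/
abbrev FrameInput (kq a kc g : ℕ) : Type :=
  Pauli (Fin kq) × Pauli (Fin a) × Pauli (Fin kc) × Pauli (Fin g)

def ceInputEquiv :
    (Pauli (Fin m) × FrameInput kq a kc g) ≃ₗ[F2]
      Pauli (Fin m ⊕ Fin kq ⊕ Fin a ⊕ Fin kc ⊕ Fin g) where
  toFun x := ceInput x.1 x.2.1 x.2.2.1 x.2.2.2.1 x.2.2.2.2
  invFun w := (w ∘ .inl, w ∘ .inr ∘ .inl, w ∘ .inr ∘ .inr ∘ .inl, w ∘ .inr ∘ .inr ∘ .inr ∘ .inl,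
    w ∘ .inr ∘ .inr ∘ .inr ∘ .inr)
  map_add' _ _ := by funext i; rcases i with i | i | i | i | i <;> rfl
  map_smul' _ _ := by funext i; rcases i with i | i | i | i | i <;> rfl
  left_inv _ := rfl
  right_inv _ := by funext i; rcases i with i | i | i | i | i <;> rfl

lemma sympl_ceInputEquiv (x y : Pauli (Fin m) × FrameInput kq a kc g) :
    sympl (ceInputEquiv x) (ceInputEquiv y) = sympl x.1 y.1 + sympl x.2.1 y.2.1 +
      sympl x.2.2.1 y.2.2.1 + sympl x.2.2.2.1 y.2.2.2.1 + sympl x.2.2.2.2 y.2.2.2.2 := by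
  simp only [ceInputEquiv, LinearEquiv.coe_mk, LinearMap.coe_mk, AddHom.coe_mk, ceInput,
    sympl_sumElim]
  ring

def freeInputs (kq a kc g : ℕ) : Submodule F2 (FrameInput kq a kc g) :=
  (⊥ : Submodule F2 (Pauli (Fin kq))).prod
    ((pureZSubmodule (Fin a)).prod ((pureZSubmodule (Fin kc)).prod ⊤))

namespace CEEnc

open LinearControl

variable (U : CEEnc m kq a kc g n)

def memStep : Pauli (Fin m) × FrameInput kq a kc g →ₗ[F2] Pauli (Fin m) :=
  LinearMap.funLeft F2 (F2 × F2) Sum.inl ∘ₗ U.toLinearMap ∘ₗ ceInputEquiv.toLinearMap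

def physStep : Pauli (Fin m) × FrameInput kq a kc g →ₗ[F2] Pauli (Fin n) :=
  LinearMap.funLeft F2 (F2 × F2) Sum.inr ∘ₗ U.toLinearMap ∘ₗ ceInputEquiv.toLinearMap

def stateMap : Module.End F2 (Pauli (Fin m)) := U.memStep ∘ₗ LinearMap.inl F2 _ _

def inputMap : FrameInput kq a kc g →ₗ[F2] Pauli (Fin m) := U.memStep ∘ₗ LinearMap.inr F2 _ _

def controllable : Submodule F2 (Pauli (Fin m)) :=
  LinearControl.controllable U.stateMap U.inputMap (freeInputs kq a kc g)

lemma memStep_eq (x : Pauli (Fin m) × FrameInput kq a kc g) :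
    U.memStep x = U.stateMap x.1 + U.inputMap x.2 := by
  rw [stateMap, inputMap, LinearMap.comp_apply, LinearMap.comp_apply, ← map_add]
  simp

def back (χ : Pauli (Fin m)) : Pauli (Fin m) × FrameInput kq a kc g :=
  ceInputEquiv.symm (U.symm (Sum.elim χ 0))

def backState (χ : Pauli (Fin m)) : Pauli (Fin m) := (U.back χ).1

variable {U}

lemma sympl_memStep (hsymp : ∀ v w, sympl (U v) (U w) = sympl v w)
    (x : Pauli (Fin m) × FrameInput kq a kc g) (χ : Pauli (Fin m)) :
    sympl (U.memStep x) χ = sympl (ceInputEquiv x) (ceInputEquiv (U.back χ)) := by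
  rw [back, LinearEquiv.apply_symm_apply, ← hsymp, LinearEquiv.apply_symm_apply]
  conv_rhs => rw [← Sum.elim_comp_inl_inr (U (ceInputEquiv x))]
  rw [sympl_sumElim, sympl_zero_right, add_zero]
  rfl

lemma sympl_stateMap (hsymp : ∀ v w, sympl (U v) (U w) = sympl v w) (M χ : Pauli (Fin m)) :
    sympl (U.stateMap M) χ = sympl M (U.backState χ) := by
  simp [stateMap, sympl_memStep hsymp, sympl_ceInputEquiv, backState]

lemma sympl_pow_stateMap (hsymp : ∀ v w, sympl (U v) (U w) = sympl v w) (M χ : Pauli (Fin m))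
    (t : ℕ) : sympl ((U.stateMap ^ t) M) χ = sympl M (U.backState^[t] χ) := by
  induction t generalizing χ with
  | zero => rfl
  | succ t ih =>
    rw [pow_succ', Module.End.mul_apply, sympl_stateMap hsymp, ih, Function.iterate_succ_apply]

lemma sympl_inputMap (hsymp : ∀ v w, sympl (U v) (U w) = sympl v w)
    (w : FrameInput kq a kc g) (χ : Pauli (Fin m)) :
    sympl (U.inputMap w) χ = sympl w.1 (U.back χ).2.1 + sympl w.2.1 (U.back χ).2.2.1 +
      sympl w.2.2.1 (U.back χ).2.2.2.1 + sympl w.2.2.2 (U.back χ).2.2.2.2 := by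
  simp [inputMap, sympl_memStep hsymp, sympl_ceInputEquiv, add_assoc]

lemma ceEdge_back (χ : Pauli (Fin m)) (hS : pureZ (U.back χ).2.2.1)
    (hC : pureZ (U.back χ).2.2.2.1) : CEEdge U (U.backState χ) χ (U.back χ).2.1 0 0 := by
  have h : ceInput (U.backState χ) (U.back χ).2.1 (U.back χ).2.2.1 (0 + (U.back χ).2.2.2.1)
      (U.back χ).2.2.2.2 = U.symm (Sum.elim χ 0) := by
    rw [zero_add]
    exact ceInputEquiv.apply_symm_apply _
  refine ⟨fun _ => rfl, _, _, (U.back χ).2.2.2.2, hS, hC, ?_, ?_⟩ <;>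
    rw [h, LinearEquiv.apply_symm_apply] <;> rfl

lemma backState_sympl_eq_zero (hsymp : ∀ v w, sympl (U v) (U w) = sympl v w) {ψ : Pauli (Fin m)}
    (hψ : ∀ y ∈ U.controllable, sympl y ψ = 0) :
    ∀ y ∈ U.controllable, sympl y (U.backState ψ) = 0 := fun y hy => by
  rw [← sympl_stateMap hsymp]
  exact hψ _ (apply_mem_controllable hy)

lemma ceEdge_back_of_sympl_eq_zero (hsymp : ∀ v w, sympl (U v) (U w) = sympl v w)
    {ψ : Pauli (Fin m)} (hψ : ∀ y ∈ U.controllable, sympl y ψ = 0) :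
    CEEdge U (U.backState ψ) ψ (U.back ψ).2.1 0 0 := by
  have hfree : ∀ w ∈ freeInputs kq a kc g, sympl (U.inputMap w) ψ = 0 :=
    fun w hw => hψ _ (apply_mem_controllable_of_mem hw)
  refine ceEdge_back ψ (pureZ_of_forall_sympl_eq_zero fun S hS => ?_)
    (pureZ_of_forall_sympl_eq_zero fun C hC => ?_)
  · simpa [sympl_inputMap hsymp] using hfree (0, S, 0, 0) (by simp [freeInputs, hS])
  · simpa [sympl_inputMap hsymp] using hfree (0, 0, C, 0) (by simp [freeInputs, hC])

lemma ceInCoset_traj (d : ℕ → FrameInput kq a kc g) (hS : ∀ t, pureZ (d t).2.1)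
    (hC : ∀ t, pureZ (d t).2.2.1) :
    CEInCoset U (fun t => (d t).1) (fun _ => 0)
      (fun t => U.physStep (traj U.stateMap U.inputMap 0 d t, d t)) := by
  refine ⟨traj U.stateMap U.inputMap 0 d, fun t => (d t).2.1, fun t => (d t).2.2.1,
    fun t => (d t).2.2.2, rfl, hS, hC, fun t => ⟨?_, ?_⟩⟩ <;> simp only [zero_add]
  · exact (U.memStep_eq (traj U.stateMap U.inputMap 0 d t, d t)).symm
  · rfl

lemma pow_stateMap_inputMap_notMem_controllable (hrec : CERecursive U) {e : Pauli (Fin kq)}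
    (he : pWeight e = 1) (s : ℕ) :
    (U.stateMap ^ s) (U.inputMap (e, 0, 0, 0)) ∉ U.controllable := by
  intro hmem
  obtain ⟨d, T, hdF, hd0, hdT⟩ := exists_traj_eq_zero hmem
  simp only [freeInputs, Submodule.mem_prod, Submodule.mem_bot, mem_pureZSubmodule] at hdF
  set d' : ℕ → FrameInput kq a kc g := fun t => if t = 0 then (e, 0, 0, 0) else d (t - 1)
  have hd' : ∀ t, t ≠ 0 → d' t = d (t - 1) := fun t ht => if_neg ht
  have hsilent : traj U.stateMap U.inputMap 0 d' (T + 1) = 0 := by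
    simpa [traj_succ', d'] using hdT
  refine hrec _ _ (fun _ _ => rfl) ⟨0, ?_, fun t ht => ⟨?_, rfl⟩⟩ _
    (ceInCoset_traj d' (fun t => ?_) (fun t => ?_)) ((Set.finite_lt_nat (T + 1)).subset ?_)
  · simp [d', he, pWeight_eq_zero_iff]
  · rw [hd' t ht]; exact (hdF _).1
  · rcases eq_or_ne t 0 with rfl | ht
    · exact fun _ => rfl
    · rw [hd' t ht]; exact (hdF _).2.1
  · rcases eq_or_ne t 0 with rfl | ht
    · exact fun _ => rfl
    · rw [hd' t ht]; exact (hdF _).2.2.1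
  · intro t ht
    by_contra hlt
    have hT : T + 1 ≤ t := by simpa using hlt
    have hd't : ∀ j, T + 1 ≤ j → d' j = 0 := fun j hj => by
      rw [hd' j (by omega), hd0 _ (by omega)]
    exact ht (by rw [traj_eq_zero_of_le hsilent hd't hT, hd't t hT, Prod.mk_zero_zero, map_zero])

lemma iterate_backState_sympl_eq_zero (hsymp : ∀ v w, sympl (U v) (U w) = sympl v w)
    {ψ : Pauli (Fin m)} (hψ : ∀ y ∈ U.controllable, sympl y ψ = 0) (j : ℕ) :
    ∀ y ∈ U.controllable, sympl y (U.backState^[j] ψ) = 0 := by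
  induction j with
  | zero => exact hψ
  | succ j ih => rw [Function.iterate_succ_apply']; exact backState_sympl_eq_zero hsymp ih

lemma catastrophic_of_isPeriodicPt (hsymp : ∀ v w, sympl (U v) (U w) = sympl v w)
    {ψ : Pauli (Fin m)} {p : ℕ} (hp : 0 < p) (hper : Function.IsPeriodicPt U.backState p ψ)
    (hψ : ∀ y ∈ U.controllable, sympl y ψ = 0) (hL : (U.back ψ).2.1 ≠ 0) :
    CECatastrophic U := by
  have : NeZero p := ⟨hp.ne'⟩
  set orbit : ZMod p → Pauli (Fin m) := fun t => U.backState^[(-t).val] ψ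
  have horbit : ∀ t, U.backState (orbit (t + 1)) = orbit t := fun t => by
    simp only [orbit, ← hper.iterate_val_add_one, neg_add_rev, neg_add_cancel_comm]
  refine ⟨p, hp, orbit, fun t => (U.back (orbit (t + 1))).2.1, fun _ => 0, fun _ => 0,
    fun t => ?_, fun _ => pWeight_eq_zero_iff.2 rfl, ⟨-1, ?_⟩⟩
  · rw [← horbit t]
    exact ceEdge_back_of_sympl_eq_zero hsymp (iterate_backState_sympl_eq_zero hsymp hψ _)
  · simpa [orbit, pWeight_eq_zero_iff] using hL

end CEEnc

theorem recursive_CE_subsystem_encoder_is_catastrophic_general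
    (hkq : 1 ≤ kq)
    (U : CEEnc m kq a kc g n)
    (hsymp : ∀ v w, sympl (U v) (U w) = sympl v w)
    (hrec : CERecursive U) :
    CECatastrophic U := by
  obtain ⟨i, p, hp, hper⟩ := exists_isPeriodicPt_iterate U.backState
  set e : Pauli (Fin kq) := Pi.single ⟨0, hkq⟩ (1, 0)
  have he : pWeight e = 1 := pWeight_single _ (by decide)
  obtain ⟨χ, hχ, hv⟩ :=
    exists_sympl_eq_zero_ne_zero (CEEnc.pow_stateMap_inputMap_notMem_controllable hrec he i)
  refine CEEnc.catastrophic_of_isPeriodicPt hsymp hp (hper χ)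
    (CEEnc.iterate_backState_sympl_eq_zero hsymp hχ i) fun hL => hv ?_
  simp [CEEnc.sympl_pow_stateMap hsymp, CEEnc.sympl_inputMap hsymp, hL]

/-- Every recursive classically-enhanced subsystem convolutional encoder
with at least one information qubit is catastrophic. -/
theorem recursive_CE_subsystem_encoder_is_catastrophic
    (hn : n = kq + a + kc + g) (hkq : 1 ≤ kq)
    (U : CEEnc m kq a kc g n)
    (hsymp : ∀ v w, sympl (U v) (U w) = sympl v w)
    (hrec : CERecursive U) :
    CECatastrophic U :=
  recursive_CE_subsystem_encoder_is_catastrophic_general hkq U hsymp hrec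
end

section
/- Let U be the seed transformation of a classically-enhanced subsystem convolutional encoder, and let the same matrix U be re-interpreted as a stabilizer (standard quantum) convolutional encoder by re-designating all k_c classical bits and all g gauge qubits as ancilla qubits. Then for every logical input sequence whose classical part is identity in every frame (L_{c,t}^x = 0 for all t), the logical coset C'((L_{q,t})) of the stabilizer encoder is a subset of the logical coset C(((L_{q,t} : 0))) of the original classically-enhanced subsystem encoder. Consequently, if every element of the original coset has infinite weight, then every element of the stabilizer coset has infinite weight; in particular, if the original encoder is recursive then the stabilizer encoder obtained by this re-designation is recursive. -/
variable {m kq a kc g n : ℕ}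

/-- The logical coset of the stabilizer re-interpretation of the same matrix `U`:
all classical bits and gauge qubits are re-designated as ancilla qubits, so for each
frame one chooses an arbitrary pure-Z operator on all non-information positions. -/
def StabInCoset (U : CEEnc m kq a kc g n) (Lq : ℕ → Pauli (Fin kq))
    (P : ℕ → Pauli (Fin n)) : Prop :=
  ∃ (M : ℕ → Pauli (Fin m)) (Sz : ℕ → Pauli (Fin a)) (Cz : ℕ → Pauli (Fin kc))
    (Gz : ℕ → Pauli (Fin g)),
    M 0 = 0 ∧ (∀ t, pureZ (Sz t)) ∧ (∀ t, pureZ (Cz t)) ∧ (∀ t, pureZ (Gz t)) ∧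
    ∀ t, M (t + 1) = outMem (U (ceInput (M t) (Lq t) (Sz t) (Cz t) (Gz t))) ∧
         P t = outPhys (U (ceInput (M t) (Lq t) (Sz t) (Cz t) (Gz t)))

/-- Recursiveness of the stabilizer re-interpretation of `U`. -/
def StabRecursive (U : CEEnc m kq a kc g n) : Prop :=
  ∀ Lq : ℕ → Pauli (Fin kq),
    (∃ t0 : ℕ, pWeight (Lq t0) = 1 ∧ ∀ t, t ≠ t0 → Lq t = 0) →
    ∀ P : ℕ → Pauli (Fin n), StabInCoset U Lq P → {t : ℕ | P t ≠ 0}.Infinite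

/-! Every choice the stabilizer re-interpretation allows is also allowed in the original
encoder: a pure-Z operator on a gauge qubit is one particular gauge operator, and when the
classical logical input vanishes, the classical positions carry exactly a pure-Z operator. -/

theorem pWeight_zero {ι : Type} [Fintype ι] : pWeight (0 : Pauli ι) = 0 := by
  simp [pWeight]

theorem StabInCoset.ceInCoset {U : CEEnc m kq a kc g n} {Lq : ℕ → Pauli (Fin kq)}
    {P : ℕ → Pauli (Fin n)} (h : StabInCoset U Lq P) : CEInCoset U Lq (fun _ => 0) P := by
  obtain ⟨M, Sz, Cz, Gz, hM0, hSz, hCz, -, hrec⟩ := h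
  exact ⟨M, Sz, Cz, Gz, hM0, hSz, hCz, fun t => by simpa only [zero_add] using hrec t⟩

theorem CERecursive.stabRecursive {U : CEEnc m kq a kc g n} (hU : CERecursive U) :
    StabRecursive U := by
  rintro Lq ⟨t0, hweight, hzero⟩ P hP
  refine hU Lq (fun _ => 0) (fun _ _ => rfl) ⟨t0, ?_, fun t ht => ⟨hzero t ht, rfl⟩⟩ P
    hP.ceInCoset
  rw [pWeight_zero, hweight]

theorem stabilizer_coset_subset_CE_coset_general
    (U : CEEnc m kq a kc g n) :
    (∀ (Lq : ℕ → Pauli (Fin kq)) (P : ℕ → Pauli (Fin n)),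
      StabInCoset U Lq P → CEInCoset U Lq (fun _ => 0) P) ∧
    (∀ Lq : ℕ → Pauli (Fin kq),
      (∀ P : ℕ → Pauli (Fin n), CEInCoset U Lq (fun _ => 0) P → {t : ℕ | P t ≠ 0}.Infinite) →
      ∀ P : ℕ → Pauli (Fin n), StabInCoset U Lq P → {t : ℕ | P t ≠ 0}.Infinite) ∧
    (CERecursive U → StabRecursive U) :=
  ⟨fun _ _ hP => hP.ceInCoset, fun _ hCE P hP => hCE P hP.ceInCoset,
    CERecursive.stabRecursive⟩

/-- For every logical input sequence whose classical part is identity in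
every frame, the logical coset of the stabilizer re-interpretation is a subset of the
logical coset of the original classically-enhanced subsystem encoder; consequently, if
every element of the original coset has infinite weight then so does every element of the
stabilizer coset, and in particular recursiveness of the original encoder implies
recursiveness of the stabilizer encoder. -/
theorem stabilizer_coset_subset_CE_coset
    (hn : n = kq + a + kc + g)
    (U : CEEnc m kq a kc g n)
    (hsymp : ∀ v w, sympl (U v) (U w) = sympl v w) :
    (∀ (Lq : ℕ → Pauli (Fin kq)) (P : ℕ → Pauli (Fin n)),
      StabInCoset U Lq P → CEInCoset U Lq (fun _ => 0) P) ∧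
    (∀ Lq : ℕ → Pauli (Fin kq),
      (∀ P : ℕ → Pauli (Fin n), CEInCoset U Lq (fun _ => 0) P → {t : ℕ | P t ≠ 0}.Infinite) →
      ∀ P : ℕ → Pauli (Fin n), StabInCoset U Lq P → {t : ℕ | P t ≠ 0}.Infinite) ∧
    (CERecursive U → StabRecursive U) :=
  stabilizer_coset_subset_CE_coset_general U
end

section
/- Let U be the seed transformation of a classically-enhanced subsystem convolutional encoder, and let the same matrix U be re-interpreted as a stabilizer (standard quantum) convolutional encoder by re-designating all k_c classical bits and all g gauge qubits as ancilla qubits. Then every edge of the state diagram of the stabilizer encoder is also an edge of the state diagram of the original classically-enhanced subsystem encoder, with the same physical label and with logical label (L_q : 0) corresponding to logical label L_q. Consequently, if the stabilizer encoder is catastrophic (its state diagram contains a zero physical-weight cycle carrying nonzero logical weight), then the original classically-enhanced subsystem encoder is catastrophic. -/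
variable {m kq a kc g n : ℕ}

/-- Edge of the state diagram of the stabilizer re-interpretation of `U`, obtained by
re-designating all classical bits and gauge qubits as ancilla qubits: a pure-Z operator
on all non-information positions. -/
def StabEdge (U : CEEnc m kq a kc g n) (M M' : Pauli (Fin m)) (Lq : Pauli (Fin kq))
    (P : Pauli (Fin n)) : Prop :=
  ∃ (Sz : Pauli (Fin a)) (Cz : Pauli (Fin kc)) (Gz : Pauli (Fin g)),
    pureZ Sz ∧ pureZ Cz ∧ pureZ Gz ∧
    outMem (U (ceInput M Lq Sz Cz Gz)) = M' ∧
    outPhys (U (ceInput M Lq Sz Cz Gz)) = P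

/-- Catastrophicity of the stabilizer re-interpretation of `U`. -/
def StabCatastrophic (U : CEEnc m kq a kc g n) : Prop :=
  ∃ ℓ : ℕ, 0 < ℓ ∧ ∃ (Ms : ZMod ℓ → Pauli (Fin m)) (Lqs : ZMod ℓ → Pauli (Fin kq))
    (Ps : ZMod ℓ → Pauli (Fin n)),
    (∀ t, StabEdge U (Ms t) (Ms (t + 1)) (Lqs t) (Ps t)) ∧
    (∀ t, pWeight (Ps t) = 0) ∧
    (∃ t, pWeight (Lqs t) ≠ 0)

/-- Every edge of the state diagram of the stabilizer re-interpretation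
is an edge of the state diagram of the original classically-enhanced subsystem encoder,
with the same physical label and logical label `(L_q : 0)`; consequently, if the
stabilizer encoder is catastrophic then so is the original encoder. -/
theorem stabilizer_edges_subset_CE_edges
    (hn : n = kq + a + kc + g)
    (U : CEEnc m kq a kc g n)
    (hsymp : ∀ v w, sympl (U v) (U w) = sympl v w) :
    (∀ (M M' : Pauli (Fin m)) (Lq : Pauli (Fin kq)) (P : Pauli (Fin n)),
      StabEdge U M M' Lq P → CEEdge U M M' Lq 0 P) ∧
    (StabCatastrophic U → CECatastrophic U) := by
  have hedge : ∀ (M M' : Pauli (Fin m)) (Lq : Pauli (Fin kq)) (P : Pauli (Fin n)),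
      StabEdge U M M' Lq P → CEEdge U M M' Lq 0 P := by
    intro M M' Lq P ⟨Sz, Cz, Gz, hSz, hCz, hGz, hM, hP⟩
    refine ⟨fun i => rfl, Sz, Cz, Gz, hSz, hCz, ?_, ?_⟩ <;>
      simpa [zero_add] using (by assumption : _)
  refine ⟨hedge, ?_⟩
  rintro ⟨ℓ, hℓ, Ms, Lqs, Ps, hE, hW, t, ht⟩
  refine ⟨ℓ, hℓ, Ms, Lqs, fun _ => 0, Ps, fun s => hedge _ _ _ _ (hE s), hW, t, ?_⟩
  have : pWeight (0 : Pauli (Fin kc)) = 0 := by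
    simp [pWeight]
  omega
end
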